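/- arXiv:1512.04703 — 7 statements merged into one kernel-verified Lean document; each statement's English description precedes it below -/
import Mathlib

section
/- Let p be a prime, A a commutative Noetherian ring of characteristic p, and I ⊆ A an ideal such that A is I-adically complete. Then A is F-finite if and only if A/I is F-finite. -/
/-- A commutative ring `B` is `F`-finite (with respect to the prime `p`) if the `p`-th power
map is a ring endomorphism making `B` into a finitely generated module over itself via
restriction of scalars along it. -/
def IsFFinite (p : ℕ) (B : Type*) [CommRing B] : Prop :=
  ∃ f : B →+* B, (∀ x : B, f x = x ^ p) ∧ f.Finite

/-!
Reducing a finite Frobenius modulo `I` keeps it finite. Conversely, regard `A` as an algebra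
over itself through Frobenius `φ`. As `I` is finitely generated, finiteness of `A → A/I` passes
to `A → A/Iⁿ` for every `n`, and `Iⁿ ⊆ φ(I)A` for large `n` because `I ⊆ √(φ(I)A)`. Hence
`A/φ(I)A`, the reduction of the `A`-module `A` modulo `I`, is finite over `A`. Since `A` is
`I`-adically complete and `φ(I)A ⊆ I` makes `A` separated for the `φ(I)A`-adic topology,
the complete form of Nakayama's lemma lifts generators of `A/φ(I)A` to generators of `A`.
-/

open Pointwise Submodule

instance IsPrecomplete.pi {R : Type*} [CommRing R] (I : Ideal R) {ι : Type*} [Finite ι]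
    (M : ι → Type*) [∀ i, AddCommGroup (M i)] [∀ i, Module R (M i)]
    [∀ i, IsPrecomplete I (M i)] : IsPrecomplete I (∀ i, M i) := by
  classical
  have := Fintype.ofFinite ι
  rw [← AdicCompletion.of_surjective_iff]
  intro x
  choose y hy using fun i ↦ AdicCompletion.of_surjective I (M i) (AdicCompletion.pi I M x i)
  refine ⟨y, (AdicCompletion.piEquivOfFintype I M).injective (funext fun i ↦ ?_)⟩
  rw [AdicCompletion.piEquivOfFintype_apply, AdicCompletion.piEquivOfFintype_apply, ← hy]
  simp only [AdicCompletion.pi, LinearMap.pi_apply, AdicCompletion.map_of]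
  rfl

theorem IsHausdorff.of_le {R M : Type*} [CommRing R] [AddCommGroup M] [Module R M]
    {I J : Ideal R} (hJI : J ≤ I) [IsHausdorff I M] : IsHausdorff J M :=
  ⟨fun x hx ↦ IsHausdorff.haus ‹_› x fun n ↦
    (hx n).mono (smul_mono_left (Ideal.pow_right_mono hJI n))⟩

theorem Submodule.span_eq_top_of_span_sup_smul_top {R N : Type*} [CommRing R] [AddCommGroup N]
    [Module R N] {I : Ideal R} [IsPrecomplete I R] [IsHausdorff I N] {s : Set N} (hs : s.Finite)
    (h : span R s ⊔ I • ⊤ = ⊤) : span R s = ⊤ := by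
  have := hs.fintype
  let f := Fintype.linearCombination R (fun i : s ↦ (i : N))
  have hf : LinearMap.range f = span R s := by
    rw [Fintype.range_linearCombination, Subtype.range_coe_subtype, Set.ofPred_mem_eq]
  have hfI : Function.Surjective ((I • ⊤ : Submodule R N).mkQ ∘ₗ f) := by
    intro y
    obtain ⟨x, rfl⟩ := mkQ_surjective _ y
    have hx : x ∈ span R s ⊔ I • ⊤ := by simp [h]
    obtain ⟨u, hu, v, hv, rfl⟩ := mem_sup.1 hx
    obtain ⟨c, rfl⟩ := hf ▸ hu
    refine ⟨c, ?_⟩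
    simp [(Quotient.mk_eq_zero _).2 hv]
  rw [← hf, LinearMap.range_eq_top]
  exact surjective_of_mkQ_comp_surjective hfI

theorem Submodule.exists_finite_span_sup_ker_eq_top {R M N : Type*} [Ring R] [AddCommGroup M]
    [Module R M] [AddCommGroup N] [Module R N] [Module.Finite R N] (π : M →ₗ[R] N)
    (hπ : Function.Surjective π) : ∃ s : Set M, s.Finite ∧ span R s ⊔ LinearMap.ker π = ⊤ := by
  obtain ⟨t, ht⟩ := Module.Finite.fg_top (R := R) (M := N)
  refine ⟨Function.surjInv hπ '' t, t.finite_toSet.image _, ?_⟩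
  rw [← comap_map_eq, map_span, ← Set.image_comp, Function.comp_surjInv, Set.image_id, ht,
    comap_top]

theorem Submodule.exists_finite_span_sup_pow_eq_top {R S : Type*} [CommRing R] [CommRing S]
    [Algebra R S] {J : Ideal S} (hJ : J.FG) {s : Set S} (hs : s.Finite)
    (h : span R s ⊔ J.restrictScalars R = ⊤) (n : ℕ) :
    ∃ t : Set S, t.Finite ∧ span R t ⊔ (J ^ n).restrictScalars R = ⊤ := by
  obtain ⟨G, rfl⟩ := hJ
  set J := Ideal.span (G : Set S)
  have hGJ : span R (G : Set S) ≤ J.restrictScalars R := span_le.2 Ideal.subset_span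
  have hJG : J.restrictScalars R ≤ span R G * ⊤ := by
    intro x hx
    obtain ⟨c, -, rfl⟩ := mem_span_finset.1 hx
    refine sum_mem fun g hg ↦ ?_
    rw [smul_eq_mul, mul_comm (c g)]
    exact mul_mem_mul (subset_span hg) mem_top
  induction n with
  | zero => exact ⟨∅, Set.finite_empty, by simp [Ideal.one_eq_top]⟩
  | succ n ih =>
    obtain ⟨t, ht, hspan⟩ := ih
    refine ⟨s ∪ G * t, hs.union (G.finite_toSet.mul ht), top_le_iff.1 (h ▸ ?_)⟩
    calc span R s ⊔ J.restrictScalars R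
        ≤ span R s ⊔ span R G * (span R t ⊔ (J ^ n).restrictScalars R) := by
          rw [hspan]; exact sup_le_sup_left hJG _
      _ = span R s ⊔ (span R (G * t) ⊔ span R G * (J ^ n).restrictScalars R) := by
          rw [mul_sup, span_mul_span]
      _ ≤ span R (s ∪ G * t) ⊔ (J ^ (n + 1)).restrictScalars R := by
          rw [span_union, sup_assoc, pow_succ']
          exact sup_le_sup_left (sup_le_sup_left (mul_le_mul_left hGJ _) _) _

theorem RingHom.Finite.of_isPrecomplete_of_finite_quotient {R S : Type*} [CommRing R]
    [CommRing S] {f : R →+* S} {I : Ideal R} [IsPrecomplete I R] [IsHausdorff (I.map f) S]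
    {J : Ideal S} (hJ : J.FG) (hJI : J ≤ (I.map f).radical)
    (hf : ((Ideal.Quotient.mk J).comp f).Finite) : f.Finite := by
  algebraize [f]
  have : Module.Finite R (S ⧸ J) := hf
  have : IsHausdorff I S := IsHausdorff.map_algebraMap_iff.1 ‹_›
  obtain ⟨s, hs, hsJ⟩ := exists_finite_span_sup_ker_eq_top (Ideal.Quotient.mkₐ R J).toLinearMap
    (Ideal.Quotient.mkₐ_surjective R J)
  have hker : LinearMap.ker (Ideal.Quotient.mkₐ R J).toLinearMap = J.restrictScalars R := by
    ext; simp [Ideal.Quotient.eq_zero_iff_mem]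
  obtain ⟨n, hn⟩ := Ideal.exists_pow_le_of_le_radical_of_fg hJI hJ
  obtain ⟨t, ht, htJ⟩ := exists_finite_span_sup_pow_eq_top hJ hs (hker ▸ hsJ) n
  have htI : span R t ⊔ I • ⊤ = ⊤ := by
    rw [Ideal.smul_top_eq_map, ← top_le_iff, ← htJ]
    exact sup_le_sup_left (restrictScalars_mono R hn) _
  exact ⟨⟨ht.toFinset, by simpa using span_eq_top_of_span_sup_smul_top ht htI⟩⟩

theorem RingHom.Finite.quotientMap {R S : Type*} [CommRing R] [CommRing S] {f : R →+* S}
    (hf : f.Finite) {I : Ideal R} {J : Ideal S} (hIJ : I ≤ J.comap f) :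
    (Ideal.quotientMap J f hIJ).Finite :=
  .of_comp_finite (f := Ideal.Quotient.mk I) <| by
    rw [Ideal.quotientMap_comp_mk]
    exact (of_surjective _ Ideal.Quotient.mk_surjective).comp hf

theorem IsFFinite.quotient {p : ℕ} (hp : p ≠ 0) {A : Type*} [CommRing A] (I : Ideal A)
    (h : IsFFinite p A) : IsFFinite p (A ⧸ I) := by
  obtain ⟨f, hf, hfin⟩ := h
  have hI : I ≤ I.comap f := fun x hx ↦ by
    simpa [hf] using I.pow_mem_of_mem hx p (pos_of_ne_zero hp)
  refine ⟨Ideal.quotientMap I f hI, Ideal.Quotient.mk_surjective.forall.2 fun x ↦ ?_,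
    hfin.quotientMap hI⟩
  simp [hf]

/-- If `A` is a Noetherian ring of characteristic `p` which is `I`-adically complete with
respect to an ideal `I ⊆ A`, then `A` is F-finite if and only if `A/I` is F-finite. -/
theorem isFFinite_iff_quotient_of_adicComplete (p : ℕ) [Fact p.Prime]
    (A : Type*) [CommRing A] [IsNoetherianRing A] [CharP A p]
    (I : Ideal A) [IsAdicComplete I A] :
    IsFFinite p A ↔ IsFFinite p (A ⧸ I) := by
  refine ⟨IsFFinite.quotient (Fact.out : p.Prime).ne_zero I, fun ⟨g, hg, hgfin⟩ ↦ ?_⟩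
  refine ⟨frobenius A p, frobenius_def p, ?_⟩
  have hIp : I ≤ (I.map (frobenius A p)).radical := fun x hx ↦
    ⟨p, frobenius_def p x ▸ Ideal.mem_map_of_mem _ hx⟩
  have : IsHausdorff (I.map (frobenius A p)) A := .of_le <| Ideal.map_le_iff_le_comap.2
    fun x hx ↦ (frobenius_def p x).symm ▸ I.pow_mem_of_mem hx p (Fact.out : p.Prime).pos
  refine .of_isPrecomplete_of_finite_quotient (IsNoetherian.noetherian I) hIp ?_
  have hcomp : (Ideal.Quotient.mk I).comp (frobenius A p) = g.comp (Ideal.Quotient.mk I) := by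
    ext x; simp [hg, frobenius_def]
  rw [hcomp]
  exact hgfin.comp (.of_surjective _ Ideal.Quotient.mk_surjective)
end

section
/- Let A be a commutative Noetherian ring, I ⊆ A an ideal, M a finitely generated A-module, and i ≥ 1. Then the pro abelian group {Tor_i^A(M, A/I^s)}_s vanishes; explicitly, for every s ≥ 1 there exists t ≥ s such that the homomorphism Tor_i^A(M, A/I^t) → Tor_i^A(M, A/I^s) induced by the canonical surjection A/I^t → A/I^s is the zero map. -/
/-!
Dimension shifting in `M`. Choose `0 → K → F → M → 0` with `F` finite free and compute
`Tor(-, A/I^t)` and `Tor(-, A/I^s)` by projective resolutions `P → Q` lifting `A/I^t → A/I^s`.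
A cycle of `M ⊗ P` lifts to `F ⊗ P`, and its boundary is a cycle of `K ⊗ P` one degree lower;
as `F ⊗ Q` is acyclic in positive degrees, `Tor_{i+1}(M, -)` is killed as soon as `Tor_i(K, -)`
is. In degree one, `Tor_1(M, A/I^t) = (K ∩ I^t F) / I^t K`, and the Artin–Rees lemma gives
`K ∩ I^t F ⊆ I^s K` for `t` large.
-/

open CategoryTheory

universe u

open TensorProduct LinearMap

section ArtinRees

variable {A : Type u} [CommRing A] [IsNoetherianRing A] (I : Ideal A)
  {F : Type u} [AddCommGroup F] [Module A F] [Module.Finite A F] (K : Submodule A F)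

theorem Ideal.exists_pow_smul_top_inf_le_pow_smul (s : ℕ) :
    ∃ t, s ≤ t ∧ (I ^ t • ⊤ : Submodule A F) ⊓ K ≤ I ^ s • K := by
  obtain ⟨k, hk⟩ := Ideal.exists_pow_inf_eq_pow_smul I K
  refine ⟨s + k, Nat.le_add_right s k, ?_⟩
  rw [hk (s + k) (Nat.le_add_left k s), Nat.add_sub_cancel]
  exact Submodule.smul_mono le_rfl inf_le_right

theorem Ideal.exists_lTensor_factor_eq_zero_of_rTensor_subtype_eq_zero (s : ℕ) :
    ∃ t, ∃ hst : s ≤ t, ∀ x : K ⊗[A] (A ⧸ I ^ t), rTensor _ K.subtype x = 0 →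
      lTensor K (Submodule.factor (Ideal.pow_le_pow_right hst)) x = 0 := by
  obtain ⟨t, hst, hAR⟩ := I.exists_pow_smul_top_inf_le_pow_smul K s
  refine ⟨t, hst, fun x hx => ?_⟩
  obtain ⟨x₀, rfl⟩ : ∃ x₀ : K, x₀ ⊗ₜ[A] (1 : A ⧸ I ^ t) = x := by
    obtain ⟨x₀, hx₀⟩ :=
      Submodule.Quotient.mk_surjective _ (tensorQuotEquivQuotSMul K (I ^ t) x)
    refine ⟨x₀, ?_⟩
    rw [← tensorQuotEquivQuotSMul_symm_mk, hx₀, LinearEquiv.symm_apply_apply]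
  rw [rTensor_tmul, Submodule.subtype_apply, ← tensorQuotEquivQuotSMul_symm_mk,
    LinearEquiv.map_eq_zero_iff, Submodule.Quotient.mk_eq_zero] at hx
  change x₀ ⊗ₜ[A] (1 : A ⧸ I ^ s) = 0
  rw [← tensorQuotEquivQuotSMul_symm_mk, LinearEquiv.map_eq_zero_iff,
    Submodule.Quotient.mk_eq_zero, Submodule.mem_smul_top_iff]
  exact hAR ⟨hx, x₀.2⟩

end ArtinRees

theorem LinearMap.rTensor_lTensor_comm_apply {A : Type u} [CommRing A]
    {M N P Q : Type u} [AddCommGroup M] [AddCommGroup N] [AddCommGroup P] [AddCommGroup Q]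
    [Module A M] [Module A N] [Module A P] [Module A Q]
    (f : M →ₗ[A] N) (g : P →ₗ[A] Q) (x : M ⊗[A] P) :
    rTensor Q f (lTensor M g x) = lTensor N g (rTensor P f x) := by
  rw [← comp_apply, ← comp_apply, rTensor_comp_lTensor, lTensor_comp_rTensor]

section TensorComplex

variable {A : Type u} [CommRing A] {ι : Type*} {c : ComplexShape ι}
  {P Q : HomologicalComplex (ModuleCat.{u} A) c} {M F : Type u}
  [AddCommGroup M] [Module A M] [AddCommGroup F] [Module A F]

theorem lTensor_d_lTensor_f (φ : P ⟶ Q) (i j : ι) (x : M ⊗[A] P.X i) :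
    lTensor M (Q.d i j).hom (lTensor M (φ.f i).hom x) =
      lTensor M (φ.f j).hom (lTensor M (P.d i j).hom x) := by
  rw [← lTensor_comp_apply, ← lTensor_comp_apply, ← ModuleCat.hom_comp,
    ← ModuleCat.hom_comp, φ.comm]

theorem lTensor_d_lTensor_d (i j k : ι) (x : M ⊗[A] P.X i) :
    lTensor M (P.d j k).hom (lTensor M (P.d i j).hom x) = 0 := by
  rw [← lTensor_comp_apply, ← ModuleCat.hom_comp, P.d_comp_d, ModuleCat.hom_zero, lTensor_zero,
    LinearMap.zero_apply]

theorem exists_rTensor_eq_and_lTensor_d_eq {e : F →ₗ[A] M} (he : Function.Surjective e)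
    {i j : ι} (z : M ⊗[A] P.X i) (hz : lTensor M (P.d i j).hom z = 0) :
    ∃ (y : F ⊗[A] P.X i) (b : ker e ⊗[A] P.X j),
      rTensor _ e y = z ∧ lTensor F (P.d i j).hom y = rTensor _ (ker e).subtype b := by
  obtain ⟨y, rfl⟩ := rTensor_surjective (P.X i) he z
  have hexact := rTensor_exact (P.X j) (exact_subtype_ker_map e) he
  obtain ⟨b, hb⟩ :=
    (hexact (lTensor F (P.d i j).hom y)).mp (by rwa [rTensor_lTensor_comm_apply])
  exact ⟨y, b, rfl, hb.symm⟩

theorem exists_lTensor_d_eq_lTensor_f_rTensor [Module.Flat A F] (φ : P ⟶ Q) (e : F →ₗ[A] M)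
    {i j k : ι}
    (hQ : Function.Exact (Q.d k j).hom (Q.d j i).hom) (y : F ⊗[A] P.X j)
    (b : ker e ⊗[A] P.X i) (c : ker e ⊗[A] Q.X j)
    (hy : lTensor F (P.d j i).hom y = rTensor _ (ker e).subtype b)
    (hc : lTensor _ (Q.d j i).hom c = lTensor _ (φ.f i).hom b) :
    ∃ w : M ⊗[A] Q.X k,
      lTensor M (Q.d k j).hom w = lTensor M (φ.f j).hom (rTensor _ e y) := by
  have hcycle : lTensor F (Q.d j i).hom
      (lTensor F (φ.f j).hom y - rTensor _ (ker e).subtype c) = 0 := by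
    rw [map_sub, lTensor_d_lTensor_f, hy, ← rTensor_lTensor_comm_apply,
      ← rTensor_lTensor_comm_apply, hc, sub_self]
  obtain ⟨w, hw⟩ := (Module.Flat.lTensor_exact F hQ _).mp hcycle
  refine ⟨rTensor _ e w, ?_⟩
  rw [← rTensor_lTensor_comm_apply, hw, map_sub, ← rTensor_comp_apply, comp_ker_subtype,
    rTensor_zero, LinearMap.zero_apply, sub_zero, rTensor_lTensor_comm_apply]

end TensorComplex

section Homology

variable {R : Type u} [Ring R]

theorem CategoryTheory.ShortComplex.moduleCat_homologyMap_eq_zero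
    {S₁ S₂ : ShortComplex (ModuleCat.{u} R)} (φ : S₁ ⟶ S₂)
    (h : ∀ x : S₁.X₂, S₁.g x = 0 → ∃ y : S₂.X₁, S₂.f y = φ.τ₂ x) :
    ShortComplex.homologyMap φ = 0 := by
  have hmem : ∀ x ∈ LinearMap.ker S₁.g.hom, φ.τ₂ x ∈ LinearMap.ker S₂.g.hom := by
    intro x hx
    rw [LinearMap.mem_ker] at hx ⊢
    rw [← ConcreteCategory.comp_apply, φ.comm₂₃, ConcreteCategory.comp_apply]
    simp [hx]
  let γ : ShortComplex.LeftHomologyMapData φ S₁.moduleCatLeftHomologyData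
      S₂.moduleCatLeftHomologyData :=
    { φK := ModuleCat.ofHom (φ.τ₂.hom.restrict hmem)
      φH := 0
      commi := rfl
      commf' := by
        ext x
        exact Subtype.ext (ConcreteCategory.congr_hom φ.comm₁₂ x).symm
      commπ := by
        ext x
        obtain ⟨y, hy⟩ := h x.1 x.2
        exact ((Submodule.Quotient.mk_eq_zero _).2
          (LinearMap.mem_range.2 ⟨y, Subtype.ext hy⟩)).symm }
  rw [γ.homologyMap_eq]
  simp [γ]

theorem HomologicalComplex.moduleCat_homologyMap_succ_eq_zero
    {K L : ChainComplex (ModuleCat.{u} R) ℕ} (φ : K ⟶ L) (n : ℕ)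
    (h : ∀ x : K.X (n + 1), K.d (n + 1) n x = 0 →
      ∃ y : L.X (n + 2), L.d (n + 2) (n + 1) y = φ.f (n + 1) x) :
    HomologicalComplex.homologyMap φ (n + 1) = 0 := by
  let α := HomologicalComplex.natIsoSc' (ModuleCat.{u} R) (ComplexShape.down ℕ)
    (n + 2) (n + 1) n (by simp) (by simp)
  have hnat : (HomologicalComplex.shortComplexFunctor (ModuleCat.{u} R) _ (n + 1)).map φ =
      α.hom.app K ≫ (HomologicalComplex.shortComplexFunctor' (ModuleCat.{u} R) _
        (n + 2) (n + 1) n).map φ ≫ α.inv.app L := by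
    rw [← α.hom.naturality_assoc φ]
    simp
  change ShortComplex.homologyMap _ = 0
  rw [hnat, ShortComplex.homologyMap_comp, ShortComplex.homologyMap_comp,
    ShortComplex.moduleCat_homologyMap_eq_zero
      ((HomologicalComplex.shortComplexFunctor' _ _ (n + 2) (n + 1) n).map φ) h,
    Limits.zero_comp, Limits.comp_zero]
  rfl

end Homology

section ChainComplex

variable {A : Type u} [CommRing A] {P Q : ChainComplex (ModuleCat.{u} A) ℕ}
  (M : Type u) [AddCommGroup M] [Module A M]

def MapsTensorCyclesToBoundaries (φ : P ⟶ Q) (n : ℕ) : Prop :=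
  ∀ z : M ⊗[A] P.X (n + 1), lTensor M (P.d (n + 1) n).hom z = 0 →
    ∃ w : M ⊗[A] Q.X (n + 2),
      lTensor M (Q.d (n + 2) (n + 1)).hom w = lTensor M (φ.f (n + 1)).hom z

variable {M} {F : Type u} [AddCommGroup F] [Module A F] [Module.Flat A F] {e : F →ₗ[A] M}

theorem mapsTensorCyclesToBoundaries_succ (he : Function.Surjective e) (φ : P ⟶ Q) {n : ℕ}
    [Module.Flat A (P.X n)]
    (hQ : Function.Exact (Q.d (n + 3) (n + 2)).hom (Q.d (n + 2) (n + 1)).hom)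
    (h : MapsTensorCyclesToBoundaries (ker e) φ n) :
    MapsTensorCyclesToBoundaries M φ (n + 1) := by
  intro z hz
  obtain ⟨y, b, rfl, hy⟩ := exists_rTensor_eq_and_lTensor_d_eq he z hz
  have hb : lTensor _ (P.d (n + 1) n).hom b = 0 := by
    apply Module.Flat.rTensor_preserves_injective_linearMap _ (ker e).injective_subtype
    rw [map_zero, rTensor_lTensor_comm_apply, ← hy, lTensor_d_lTensor_d]
  obtain ⟨c, hc⟩ := h b hb
  exact exists_lTensor_d_eq_lTensor_f_rTensor φ e hQ y b c hy hc

theorem mapsTensorCyclesToBoundaries_zero (he : Function.Surjective e) {X Y : ModuleCat.{u} A}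
    (P : ProjectiveResolution X) (Q : ProjectiveResolution Y) (f : X ⟶ Y)
    (φ : P.complex ⟶ Q.complex)
    (hφ : φ ≫ Q.π = P.π ≫ (ChainComplex.single₀ _).map f)
    -- `f` kills `Tor₁(M, X) = ker (ker e ⊗ X → F ⊗ X)`.
    (hf : ∀ x : ker e ⊗[A] X, rTensor X (ker e).subtype x = 0 → lTensor _ f.hom x = 0) :
    MapsTensorCyclesToBoundaries M φ 0 := by
  intro z hz
  obtain ⟨y, b, rfl, hy⟩ := exists_rTensor_eq_and_lTensor_d_eq he z hz
  obtain ⟨πP, hπP⟩ : ∃ π : P.complex.X 0 →ₗ[A] X, π = (P.π.f 0).hom := ⟨_, rfl⟩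
  obtain ⟨πQ, hπQ⟩ : ∃ π : Q.complex.X 0 →ₗ[A] Y, π = (Q.π.f 0).hom := ⟨_, rfl⟩
  have hφ₀ : πQ ∘ₗ (φ.f 0).hom = f.hom ∘ₗ πP := by
    have h : φ.f 0 ≫ Q.π.f 0 = P.π.f 0 ≫ f :=
      (HomologicalComplex.congr_hom hφ 0).trans (by simp)
    rw [hπP, hπQ]
    exact congrArg ModuleCat.Hom.hom h
  have hπPd : πP ∘ₗ (P.complex.d 1 0).hom = 0 := by
    rw [hπP]
    exact congrArg ModuleCat.Hom.hom P.complex_d_comp_π_f_zero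
  have hQ₀ : Function.Exact (lTensor (ker e) (Q.complex.d 1 0).hom) (lTensor (ker e) πQ) := by
    rw [hπQ]
    exact lTensor_exact (ker e)
      ((ShortComplex.ShortExact.moduleCat_exact_iff_function_exact _).1 Q.exact₀)
      ((ModuleCat.epi_iff_surjective (Q.π.f 0)).mp inferInstance)
  have hb : lTensor _ πQ (lTensor _ (φ.f 0).hom b) = 0 := by
    rw [← lTensor_comp_apply, hφ₀, lTensor_comp_apply]
    apply hf
    rw [rTensor_lTensor_comm_apply, ← hy, ← lTensor_comp_apply, hπPd, lTensor_zero,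
      LinearMap.zero_apply]
  obtain ⟨c, hc⟩ := (hQ₀ _).mp hb
  exact exists_lTensor_d_eq_lTensor_f_rTensor φ e
    ((ShortComplex.ShortExact.moduleCat_exact_iff_function_exact _).1 (Q.exact_succ 0)) y b c hy hc

end ChainComplex

theorem exists_mapsTensorCyclesToBoundaries {A : Type u} [CommRing A] [IsNoetherianRing A]
    (I : Ideal A) (n : ℕ) (M : Type u) [AddCommGroup M] [Module A M] [Module.Finite A M]
    (s : ℕ) :
    ∃ t, ∃ hst : s ≤ t, ∀ (P : ProjectiveResolution (ModuleCat.of A (A ⧸ I ^ t)))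
      (Q : ProjectiveResolution (ModuleCat.of A (A ⧸ I ^ s))) (φ : P.complex ⟶ Q.complex),
      φ ≫ Q.π = P.π ≫ (ChainComplex.single₀ _).map
        (ModuleCat.ofHom (Submodule.factor (Ideal.pow_le_pow_right hst))) →
      MapsTensorCyclesToBoundaries M φ n := by
  induction n generalizing M with
  | zero =>
    obtain ⟨_, e, he⟩ := Module.Finite.exists_fin' A M
    obtain ⟨t, hst, hAR⟩ := I.exists_lTensor_factor_eq_zero_of_rTensor_subtype_eq_zero (ker e) s
    exact ⟨t, hst, fun P Q φ hφ => mapsTensorCyclesToBoundaries_zero he P Q _ φ hφ hAR⟩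
  | succ n ih =>
    obtain ⟨_, e, he⟩ := Module.Finite.exists_fin' A M
    obtain ⟨t, hst, h⟩ := ih (ker e)
    exact ⟨t, hst, fun P Q φ hφ => mapsTensorCyclesToBoundaries_succ he φ
      ((ShortComplex.ShortExact.moduleCat_exact_iff_function_exact _).1 (Q.exact_succ (n + 1)))
      (h P Q φ hφ)⟩

/-- (Artin–Rees vanishing for Tor) Let `A` be a commutative Noetherian ring, `I ⊆ A` an
ideal, `M` a finitely generated `A`-module, and `i ≥ 1`.  Then the pro abelian group
`{Tor_i^A(M, A/I^s)}_s` vanishes: for every `s ≥ 1` there exists `t ≥ s` such that the map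
`Tor_i^A(M, A/I^t) → Tor_i^A(M, A/I^s)` induced by the canonical surjection
`A/I^t → A/I^s` is zero. -/
theorem tor_pro_vanishing (A : Type u) [CommRing A] [IsNoetherianRing A] (I : Ideal A)
    (M : Type u) [AddCommGroup M] [Module A M] [Module.Finite A M]
    (i : ℕ) (hi : 1 ≤ i) :
    ∀ s : ℕ, 1 ≤ s → ∃ t : ℕ, ∃ _hts : s ≤ t,
      ((Tor (ModuleCat.{u} A) i).obj (ModuleCat.of A M)).map
        (ModuleCat.ofHom (Submodule.mapQ (I ^ t) (I ^ s) LinearMap.id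
          (by rw [Submodule.comap_id]; exact Ideal.pow_le_pow_right ‹s ≤ t›))) = 0 := by
  intro s _
  obtain ⟨n, rfl⟩ : ∃ n, i = n + 1 := ⟨i - 1, by omega⟩
  obtain ⟨t, hst, h⟩ := exists_mapsTensorCyclesToBoundaries I n M s
  refine ⟨t, hst, ?_⟩
  let f := ModuleCat.ofHom (Submodule.factor (Ideal.pow_le_pow_right (I := I) hst))
  let P := projectiveResolution (ModuleCat.of A (A ⧸ I ^ t))
  let Q := projectiveResolution (ModuleCat.of A (A ⧸ I ^ s))
  let T := (MonoidalCategory.tensoringLeft (ModuleCat.{u} A)).obj (ModuleCat.of A M)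
  have hzero : (T.mapHomologicalComplex _ ⋙ HomologicalComplex.homologyFunctor _ _ (n + 1)).map
      (P.lift f Q) = 0 :=
    HomologicalComplex.moduleCat_homologyMap_succ_eq_zero _ n (h P Q _ (P.lift_commutes f Q))
  change (T.leftDerived (n + 1)).map f = 0
  rw [T.leftDerived_map_eq (n + 1) f (P.lift f Q) (P.lift_commutes f Q), hzero,
    Limits.zero_comp, Limits.comp_zero]
end

section
/- Let p be a prime and let A be a Noetherian, F-finite Z_(p)-algebra. Then for every r ≥ 1 the ring W_r(A) of p-typical Witt vectors of length r over A is Noetherian. -/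
/-!
The kernel of `W_{m+1}(A) → W_m(A)` consists of the truncations of `V^m [a]`, and it is a copy
of `A` on which `x : W(A)` acts through the ghost component `w_m`, because
`x * V^m y = V^m (F^m x * y)` and `(F^m x)₀ = w_m x`. By induction on the length it therefore
suffices that `A` is a Noetherian `W(A)`-module via `w_m`. The image of `w_m` contains the
`p^m`-th powers `w_m [a] = a ^ p ^ m` and the multiples `w_m (V^m [a]) = p ^ m * a`. Hence
lifting generators of `A/pA` over its `p^m`-th powers gives a submodule `N` with `A = N + pA`
and `p^m A ⊆ N`, so `N = A` and `A` is a finite `W(A)`-module. Eakin–Nagata, in Formanek's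
form, then transfers Noetherianity from the ring `A` to this module.
-/

theorem isNoetherian_iff_of_surjective_algebraMap {R S M : Type*} [CommSemiring R] [Semiring S]
    [Algebra R S] [AddCommMonoid M] [Module R M] [Module S M] [IsScalarTower R S M]
    (h : Function.Surjective (algebraMap R S)) : IsNoetherian R M ↔ IsNoetherian S M := by
  refine ⟨isNoetherian_of_tower R, fun _ => isNoetherian_def.2 fun N => ?_⟩
  obtain ⟨t, ht⟩ := IsNoetherian.noetherian (Submodule.span S (N : Set M))
  refine ⟨t, ?_⟩
  rw [← Submodule.restrictScalars_span R S h, ht, Submodule.restrictScalars_span R S h,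
    Submodule.span_eq]

section Formanek

variable {R M : Type*} [CommRing R] [AddCommGroup M] [Module R M]

theorem Submodule.le_annihilator_quotient_iff {I : Ideal R} {N : Submodule R M} :
    I ≤ Module.annihilator R (M ⧸ N) ↔ I • ⊤ ≤ N := by
  rw [Submodule.annihilator_quotient, Submodule.smul_le]
  simp only [SetLike.le_def, Submodule.mem_colon, Set.mem_univ, Submodule.mem_top, forall_const]

theorem isNoetherian_quotient_annihilator [IsNoetherian R M] :
    IsNoetherian R (R ⧸ Module.annihilator R M) := by
  obtain ⟨s, hs⟩ := IsNoetherian.noetherian (⊤ : Submodule R M)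
  let θ : R →ₗ[R] (s → M) := LinearMap.pi fun g => LinearMap.toSpanSingleton R M g
  have hker : LinearMap.ker θ = Module.annihilator R M := by
    ext r
    rw [← Submodule.annihilator_top, ← hs, Submodule.mem_annihilator_span, LinearMap.mem_ker]
    simp [θ, funext_iff]
  rw [← hker]
  exact isNoetherian_of_linearEquiv θ.quotKerEquivRange.symm

theorem isNoetherian_of_annihilator_le {N : Type*} [AddCommGroup N] [Module R N]
    [IsNoetherian R N] [Module.Finite R M] (h : Module.annihilator R N ≤ Module.annihilator R M) :
    IsNoetherian R M := by
  let I := Module.annihilator R N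
  let _ : Module (R ⧸ I) M :=
    Module.IsTorsionBySet.module ((Module.isTorsionBySet_iff_subset_annihilator R M).2 h)
  have : IsNoetherianRing (R ⧸ I) :=
    isNoetherian_of_tower R (isNoetherian_quotient_annihilator (M := N))
  have : Module.Finite (R ⧸ I) M := Module.Finite.of_restrictScalars_finite R _ _
  exact (isNoetherian_iff_of_surjective_algebraMap (S := R ⧸ I) (M := M)
    Ideal.Quotient.mk_surjective).2 inferInstance

theorem isNoetherian_of_forall_ne_bot_isNoetherian_quotient
    (h : ∀ N : Submodule R M, N ≠ ⊥ → IsNoetherian R (M ⧸ N)) : IsNoetherian R M := by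
  refine isNoetherian_def.2 fun Q => ?_
  obtain rfl | hQ := eq_or_ne Q ⊥
  · exact Submodule.fg_bot
  obtain ⟨x, hxQ, hx⟩ := Submodule.exists_mem_ne_zero_of_ne_bot hQ
  have hspan : Submodule.span R {x} ≠ ⊥ := by simpa using hx
  have := h _ hspan
  refine Submodule.fg_of_fg_map_of_fg_inf_ker (Submodule.span R {x}).mkQ
    (IsNoetherian.noetherian _) ?_
  rw [Submodule.ker_mkQ, inf_of_le_right ((Submodule.span_singleton_le_iff_mem _ _).2 hxQ)]
  exact Submodule.fg_span_singleton x

theorem exists_maximal_annihilator_quotient_le [Module.Finite R M] (K : Submodule R M) :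
    ∃ N, K ≤ N ∧ Maximal (fun N : Submodule R M =>
      Module.annihilator R (M ⧸ N) ≤ Module.annihilator R (M ⧸ K)) N := by
  refine zorn_le_nonempty₀ {N | Module.annihilator R (M ⧸ N) ≤ Module.annihilator R (M ⧸ K)}
    (fun c hc hchain N hN => ⟨sSup c, ?_, fun _ => le_sSup⟩) K
    (le_refl (Module.annihilator R (M ⧸ K)))
  intro r hr
  have hfg : (Ideal.span {r} • ⊤ : Submodule R M).FG :=
    Submodule.FG.smul (Submodule.fg_span_singleton r) Module.Finite.fg_top
  obtain ⟨N', hN'c, hN'⟩ := (CompleteLattice.isCompactElement_iff_le_of_directed_sSup_le _ _).1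
    ((Submodule.fg_iff_compact _).1 hfg) c ⟨N, hN⟩ hchain.directedOn
    (Submodule.le_annihilator_quotient_iff.1 ((Ideal.span_singleton_le_iff_mem _).2 hr))
  exact hc hN'c
    ((Ideal.span_singleton_le_iff_mem _).1 (Submodule.le_annihilator_quotient_iff.2 hN'))

theorem isNoetherian_quotient_of_forall_smul_top_sup [Module.Finite R M] (K : Submodule R M)
    (h : ∀ I : Ideal R, ¬ I • ⊤ ≤ K → IsNoetherian R (M ⧸ (I • ⊤ ⊔ K))) :
    IsNoetherian R (M ⧸ K) := by
  obtain ⟨N₀, hKN₀, hN₀⟩ := exists_maximal_annihilator_quotient_le K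
  have quotient_above : ∀ P, N₀ < P → IsNoetherian R (M ⧸ P) := by
    intro P hP
    set I := Module.annihilator R (M ⧸ P)
    have hIP : I • ⊤ ≤ P := Submodule.le_annihilator_quotient_iff.1 le_rfl
    have hIK : ¬ I • ⊤ ≤ K := fun hle =>
      hN₀.not_gt (Submodule.le_annihilator_quotient_iff.2 hle) hP
    have := h I hIK
    exact isNoetherian_of_surjective (Submodule.factor (sup_le hIP (hKN₀.trans hP.le)))
      (LinearMap.range_eq_top.2 (Submodule.factor_surjective _))
  have : IsNoetherian R (M ⧸ N₀) := by
    refine isNoetherian_of_forall_ne_bot_isNoetherian_quotient fun Q hQ => ?_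
    set P := Q.comap N₀.mkQ
    have hPQ : P.map N₀.mkQ = Q := by
      rw [Submodule.map_comap_eq, Submodule.range_mkQ, top_inf_eq]
    have hlt : N₀ < P := by
      refine lt_of_le_of_ne (fun x hx => ?_) fun hN₀P => hQ ?_
      · simp [P, (Submodule.Quotient.mk_eq_zero N₀).2 hx]
      · rw [← hPQ, ← hN₀P, Submodule.mkQ_map_self]
    have := quotient_above P hlt
    rw [← hPQ]
    exact isNoetherian_of_linearEquiv (Submodule.quotientQuotientEquivQuotient N₀ P hlt.le).symm
  exact isNoetherian_of_annihilator_le (N := M ⧸ N₀) hN₀.prop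

end Formanek

theorem isNoetherian_of_finite_of_isNoetherianRing (R A : Type*) [CommRing R] [CommRing A]
    [Algebra R A] [Module.Finite R A] [IsNoetherianRing A] : IsNoetherian R A := by
  by_contra hA
  let Ω : Set (Ideal A) := {J | ∃ I : Ideal R, I.map (algebraMap R A) = J ∧
    ¬ IsNoetherian R (A ⧸ I • (⊤ : Submodule R A))}
  have hbot : ⊥ ∈ Ω := ⟨⊥, Ideal.map_bot, by
    rwa [Submodule.bot_smul,
      (Submodule.quotEquivOfEqBot (⊥ : Submodule R A) rfl).isNoetherian_iff]⟩
  obtain ⟨-, ⟨I₀, rfl, hI₀⟩, hmax⟩ :=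
    set_has_maximal_iff_noetherian.2 ‹IsNoetherianRing A› Ω ⟨⊥, hbot⟩
  refine hI₀ (isNoetherian_quotient_of_forall_smul_top_sup _ fun I hI => ?_)
  by_contra hbad
  refine hmax ((I ⊔ I₀).map (algebraMap R A))
    ⟨I ⊔ I₀, rfl, by rwa [Submodule.sup_smul]⟩ ?_
  refine lt_of_le_of_ne (Ideal.map_mono le_sup_right) fun heq => hI ?_
  have := congrArg (Submodule.restrictScalars R) heq
  rw [← Ideal.smul_top_eq_map, ← Ideal.smul_top_eq_map, Submodule.sup_smul] at this
  exact this ▸ le_sup_left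

theorem IsFFinite.exists_finset_sum_pow {p : ℕ} {B : Type*} [CommRing B] (hB : IsFFinite p B)
    (m : ℕ) : ∃ t : Finset B, ∀ y, ∃ c : B → B, ∑ i ∈ t, c i ^ p ^ m * i = y := by
  obtain ⟨f, hf, hfin⟩ := hB
  have frobenius_pow : ∃ g : B →+* B, (∀ x, g x = x ^ p ^ m) ∧ g.Finite := by
    induction m with
    | zero => exact ⟨RingHom.id B, by simp, RingHom.Finite.id B⟩
    | succ k ih =>
      obtain ⟨g, hg, hgfin⟩ := ih
      exact ⟨g.comp f, fun x => by rw [RingHom.comp_apply, hf, hg, ← pow_mul, pow_succ'],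
        hgfin.comp hfin⟩
  obtain ⟨g, hg, hgfin⟩ := frobenius_pow
  -- `B` is a `B`-module in two ways; the local instances select the one through `g`.
  let _ : Algebra B B := g.toAlgebra
  let _ : Module B B := Algebra.toModule
  obtain ⟨t, ht⟩ := hgfin.fg_top
  refine ⟨t, fun y => ?_⟩
  obtain ⟨c, -, hc⟩ := Submodule.mem_span_finset.1 (ht.ge (Submodule.mem_top (x := y)))
  exact ⟨c, by simpa only [RingHom.smul_toAlgebra, hg] using hc⟩

theorem Submodule.eq_top_of_forall_sub_smul_mem {R M : Type*} [Semiring R] [AddCommGroup M]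
    [Module R M] (N : Submodule R M) {r : R} {m : ℕ} (h₁ : ∀ x, ∃ y, x - r • y ∈ N)
    (h₂ : ∀ y, r ^ m • y ∈ N) : N = ⊤ := by
  have approx : ∀ k x, ∃ y, x - r ^ k • y ∈ N := by
    intro k
    induction k with
    | zero => exact fun x => ⟨x, by simp⟩
    | succ k ih =>
      intro x
      obtain ⟨y, hy⟩ := ih x
      obtain ⟨z, hz⟩ := h₁ y
      refine ⟨z, ?_⟩
      convert N.add_mem hy (N.smul_mem (r ^ k) hz) using 1
      rw [smul_sub, smul_smul, ← pow_succ]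
      abel
  refine eq_top_iff.2 fun x _ => ?_
  obtain ⟨y, hy⟩ := approx m x
  simpa using N.add_mem hy (h₂ y)

namespace WittVector

variable {p : ℕ} [Fact p.Prime] {A : Type*} [CommRing A]

theorem ghostComponent_zero_eq_coeff (x : WittVector p A) : ghostComponent 0 x = x.coeff 0 := by
  rw [ghostComponent_apply, wittPolynomial_zero, MvPolynomial.aeval_X]

theorem coeff_zero_iterate_frobenius (m : ℕ) (x : WittVector p A) :
    (frobenius^[m] x).coeff 0 = ghostComponent m x := by
  induction m generalizing x with
  | zero => exact (ghostComponent_zero_eq_coeff x).symm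
  | succ k ih => rw [Function.iterate_succ_apply, ih, ghostComponent_frobenius]

theorem ghostComponent_iterate_verschiebung (m : ℕ) (x : WittVector p A) :
    ghostComponent m (verschiebung^[m] x) = (p : A) ^ m * x.coeff 0 := by
  induction m with
  | zero => simp [ghostComponent_zero_eq_coeff]
  | succ k ih =>
    rw [Function.iterate_succ_apply', ghostComponent_verschiebung, ih, pow_succ', mul_assoc]

theorem coeff_iterate_verschiebung_self (m : ℕ) (x : WittVector p A) :
    (verschiebung^[m] x).coeff m = x.coeff 0 := by
  simpa using iterate_verschiebung_coeff x m 0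

theorem truncate_iterate_verschiebung_eq {m : ℕ} {u v : WittVector p A}
    (h : u.coeff 0 = v.coeff 0) :
    truncate (m + 1) (verschiebung^[m] u) = truncate (m + 1) (verschiebung^[m] v) := by
  refine TruncatedWittVector.ext fun i => ?_
  rw [coeff_truncate, coeff_truncate]
  obtain hi | hi := (Nat.lt_succ_iff.1 i.2).lt_or_eq
  · rw [iterate_verschiebung_coeff_eq_zero _ hi, iterate_verschiebung_coeff_eq_zero _ hi]
  · rw [hi, coeff_iterate_verschiebung_self, coeff_iterate_verschiebung_self, h]

theorem truncate_iterate_verschiebung_teichmuller_add (m : ℕ) (a b : A) :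
    truncate (m + 1) (verschiebung^[m] (teichmuller p (a + b))) =
      truncate (m + 1) (verschiebung^[m] (teichmuller p a)) +
        truncate (m + 1) (verschiebung^[m] (teichmuller p b)) := by
  rw [← map_add, ← iterate_map_add]
  exact truncate_iterate_verschiebung_eq (by simp [add_coeff_zero, teichmuller_coeff_zero])

theorem truncate_iterate_verschiebung_teichmuller_mul (m : ℕ) (x : WittVector p A) (a : A) :
    truncate (m + 1) (verschiebung^[m] (teichmuller p (ghostComponent m x * a))) =
      truncate (m + 1) x * truncate (m + 1) (verschiebung^[m] (teichmuller p a)) := by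
  rw [← map_mul, mul_comm x, iterate_verschiebung_mul_left]
  refine truncate_iterate_verschiebung_eq ?_
  rw [mul_coeff_zero, teichmuller_coeff_zero, teichmuller_coeff_zero,
    coeff_zero_iterate_frobenius, mul_comm]

theorem _root_.TruncatedWittVector.truncate_succ_eq_zero_iff {m : ℕ}
    (z : TruncatedWittVector p (m + 1) A) :
    TruncatedWittVector.truncate (Nat.le_succ m) z = 0 ↔
      ∃ a, truncate (m + 1) (verschiebung^[m] (teichmuller p a)) = z := by
  constructor
  · intro hz
    refine ⟨z.coeff (Fin.last m), TruncatedWittVector.ext fun i => ?_⟩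
    rw [coeff_truncate]
    obtain hi | hi := (Nat.lt_succ_iff.1 i.2).lt_or_eq
    · rw [iterate_verschiebung_coeff_eq_zero _ hi]
      simpa using (congrArg (TruncatedWittVector.coeff ⟨i, hi⟩) hz).symm
    · rw [hi, coeff_iterate_verschiebung_self, teichmuller_coeff_zero]
      exact congrArg z.coeff (Fin.ext hi.symm)
  · rintro ⟨a, rfl⟩
    rw [TruncatedWittVector.truncate_wittVector_truncate]
    refine TruncatedWittVector.ext fun i => ?_
    rw [coeff_truncate, TruncatedWittVector.coeff_zero]
    exact iterate_verschiebung_coeff_eq_zero _ i.2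

theorem ghostComponent_finite (hA : IsFFinite p (A ⧸ Ideal.span {(p : A)})) (m : ℕ) :
    (ghostComponent m : WittVector p A →+* A).Finite := by
  classical
  let _ := (ghostComponent (p := p) (R := A) m).toAlgebra
  have smul_eq (x : WittVector p A) (a : A) : x • a = ghostComponent m x * a := rfl
  obtain ⟨t, ht⟩ := hA.exists_finset_sum_pow m
  obtain ⟨σ, hσ⟩ := (Ideal.Quotient.mk_surjective (I := Ideal.span {(p : A)})).hasRightInverse
  let G : Finset A := insert 1 (t.image σ)
  refine ⟨⟨G, Submodule.eq_top_of_forall_sub_smul_mem _ (r := (p : WittVector p A)) (m := m)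
    (fun a => ?_) (fun d => ?_)⟩⟩
  · obtain ⟨c, hc⟩ := ht (Ideal.Quotient.mk _ a)
    let s := ∑ i ∈ t, teichmuller p (σ (c i)) • σ i
    have hs : s ∈ Submodule.span (WittVector p A) (G : Set A) :=
      Submodule.sum_mem _ fun i hi => Submodule.smul_mem _ _ (Submodule.subset_span
        (by simpa [G] using Or.inr ⟨i, hi, rfl⟩))
    have hmod : a - s ∈ Ideal.span {(p : A)} := by
      rw [← Ideal.Quotient.eq, ← hc, map_sum]
      simp [smul_eq, ghostComponent_teichmuller, hσ _]
    obtain ⟨d, hd⟩ := Ideal.mem_span_singleton'.1 hmod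
    refine ⟨d, ?_⟩
    rwa [smul_eq, map_natCast, mul_comm, hd, sub_sub_cancel]
  · have hpd :
        (p : WittVector p A) ^ m • d = verschiebung^[m] (teichmuller p d) • (1 : A) := by
      rw [smul_eq, smul_eq, mul_one, ghostComponent_iterate_verschiebung, teichmuller_coeff_zero,
        map_pow, map_natCast]
    rw [hpd]
    exact Submodule.smul_mem _ _ (Submodule.subset_span (by simp [G]))

theorem isNoetherianRing_truncatedWittVector_succ [IsNoetherianRing A] {m : ℕ}
    (hm : (ghostComponent m : WittVector p A →+* A).Finite)
    (ih : IsNoetherianRing (TruncatedWittVector p m A)) :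
    IsNoetherianRing (TruncatedWittVector p (m + 1) A) := by
  let _ := (truncate (p := p) (R := A) m).toAlgebra
  let _ := (truncate (p := p) (R := A) (m + 1)).toAlgebra
  let _ := (ghostComponent (p := p) (R := A) m).toAlgebra
  have : Module.Finite (WittVector p A) A := hm
  have : IsNoetherian (WittVector p A) A := isNoetherian_of_finite_of_isNoetherianRing _ _
  have : IsNoetherian (WittVector p A) (TruncatedWittVector p m A) :=
    (isNoetherian_iff_of_surjective_algebraMap (truncate_surjective p m A)).2 ih
  let ψ : A →ₗ[WittVector p A] TruncatedWittVector p (m + 1) A :=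
    { toFun a := truncate (m + 1) (verschiebung^[m] (teichmuller p a))
      map_add' := truncate_iterate_verschiebung_teichmuller_add m
      map_smul' := truncate_iterate_verschiebung_teichmuller_mul m }
  let τ : TruncatedWittVector p (m + 1) A →ₐ[WittVector p A] TruncatedWittVector p m A :=
    { TruncatedWittVector.truncate (Nat.le_succ m) with
      commutes' := TruncatedWittVector.truncate_wittVector_truncate _ }
  have hψτ : LinearMap.range ψ = LinearMap.ker τ.toLinearMap := by
    ext z
    exact (TruncatedWittVector.truncate_succ_eq_zero_iff z).symm
  rw [isNoetherianRing_iff,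
    ← isNoetherian_iff_of_surjective_algebraMap (truncate_surjective p (m + 1) A)]
  exact isNoetherian_of_range_eq_ker ψ τ.toLinearMap hψτ

end WittVector

theorem truncatedWittVector_noetherian_general (p : ℕ) [Fact p.Prime]
    (A : Type*) [CommRing A] [IsNoetherianRing A]
    (hFF : IsFFinite p (A ⧸ Ideal.span {(p : A)}))
    (r : ℕ) :
    IsNoetherianRing (TruncatedWittVector p r A) := by
  induction r with
  | zero =>
    have : Subsingleton (TruncatedWittVector p 0 A) := inferInstanceAs (Subsingleton (Fin 0 → A))
    exact isNoetherianRing_iff.2 inferInstance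
  | succ m ih =>
    exact WittVector.isNoetherianRing_truncatedWittVector_succ
      (WittVector.ghostComponent_finite hFF m) ih

/-- (Langer–Zink) If `A` is a Noetherian, F-finite `ℤ_(p)`-algebra (every prime `q ≠ p` is
invertible in `A`, and `A/pA` is F-finite), then the ring `W_r(A)` of `p`-typical Witt
vectors of length `r` over `A` is Noetherian, for every `r ≥ 1`. -/
theorem truncatedWittVector_noetherian (p : ℕ) [Fact p.Prime]
    (A : Type*) [CommRing A] [IsNoetherianRing A]
    (hZp : ∀ q : ℕ, q.Prime → q ≠ p → IsUnit (q : A))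
    (hFF : IsFFinite p (A ⧸ Ideal.span {(p : A)}))
    (r : ℕ) (hr : 1 ≤ r) :
    IsNoetherianRing (TruncatedWittVector p r A) :=
  truncatedWittVector_noetherian_general p A hFF r
end

section
/- Let B be a commutative Noetherian ring and I₁, I₂ ⊆ B ideals. Then for every s ≥ 1 there exists t ≥ s such that I₁^t ∩ I₂^t ⊆ (I₁ ∩ I₂)^s. Consequently, the square of pro B-modules with corners {B/(I₁∩I₂)^s}_s, {B/I₁^s}_s, {B/I₂^s}_s, {B/(I₁+I₂)^s}_s (with the canonical quotient maps) is bicartesian. -/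
/-! By Artin–Rees there is `k` with `I₁^(k+m) ∩ N ⊆ I₁^m N` for every `m`; taking `N = I₂^s` and
`m = s` gives `I₁^(k+s) ∩ I₂^(k+s) ⊆ I₁^s I₂^s ⊆ (I₁ ∩ I₂)^s`. Middle exactness only needs
`(I₁ + I₂)^(2s) ⊆ I₁^s + I₂^s`, and the right-hand map is already surjective levelwise. -/

theorem Ideal.exists_pow_add_smul_top_inf_le_pow_smul {R M : Type*} [CommRing R] [AddCommGroup M]
    [Module R M] [IsNoetherianRing R] [Module.Finite R M] (I : Ideal R) (N : Submodule R M) :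
    ∃ k : ℕ, ∀ m : ℕ, I ^ (k + m) • ⊤ ⊓ N ≤ I ^ m • N := by
  obtain ⟨k, hk⟩ := I.exists_pow_inf_eq_pow_smul N
  refine ⟨k, fun m => ?_⟩
  rw [hk (k + m) le_self_add, Nat.add_sub_cancel_left]
  exact Submodule.smul_mono le_rfl inf_le_right

theorem Ideal.exists_pow_inf_pow_le_inf_pow {R : Type*} [CommRing R] [IsNoetherianRing R]
    (I J : Ideal R) (s : ℕ) : ∃ t : ℕ, s ≤ t ∧ I ^ t ⊓ J ^ t ≤ (I ⊓ J) ^ s := by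
  obtain ⟨k, hk⟩ := I.exists_pow_add_smul_top_inf_le_pow_smul (J ^ s)
  refine ⟨k + s, le_add_self, ?_⟩
  calc I ^ (k + s) ⊓ J ^ (k + s) ≤ I ^ (k + s) • ⊤ ⊓ J ^ s := by
        rw [Ideal.smul_eq_mul, Ideal.mul_top]
        exact inf_le_inf le_rfl (Ideal.pow_le_pow_right le_add_self)
    _ ≤ I ^ s * J ^ s := hk s
    _ = (I * J) ^ s := (mul_pow I J s).symm
    _ ≤ (I ⊓ J) ^ s := pow_le_pow_left' Ideal.mul_le_inf s

theorem Submodule.exists_sub_mem_and_sub_mem_of_sub_mem_sup {R M : Type*} [Ring R]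
    [AddCommGroup M] [Module R M] {p q : Submodule R M} {x y : M} (h : x - y ∈ p ⊔ q) :
    ∃ w : M, x - w ∈ p ∧ y - w ∈ q := by
  obtain ⟨a, ha, b, hb, hab⟩ := Submodule.mem_sup.mp h
  refine ⟨x - a, by simpa using ha, ?_⟩
  rw [show y - (x - a) = -b by rw [eq_sub_of_add_eq hab]; abel]
  exact neg_mem hb

/-- (Artin–Rees bicartesianity.) Let `B` be a commutative Noetherian ring and
`I₁, I₂ ⊆ B` ideals.  Then for every `s ≥ 1` there exists `t ≥ s` with
`I₁^t ∩ I₂^t ⊆ (I₁ ∩ I₂)^s`.  Consequently the square of pro `B`-modules with corners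
`{B/(I₁∩I₂)^s}`, `{B/I₁^s}`, `{B/I₂^s}`, `{B/(I₁+I₂)^s}` is bicartesian, i.e. the sequence
`0 → {B/(I₁∩I₂)^s} → {B/I₁^s} ⊕ {B/I₂^s} → {B/(I₁+I₂)^s} → 0` of pro modules is exact:
pro-injectivity on the left (the first clause), pro-exactness in the middle (the second
clause), and surjectivity on the right (the third clause). -/
theorem artinRees_bicartesian (B : Type*) [CommRing B] [IsNoetherianRing B]
    (I₁ I₂ : Ideal B) :
    (∀ s : ℕ, 1 ≤ s → ∃ t : ℕ, s ≤ t ∧ I₁ ^ t ⊓ I₂ ^ t ≤ (I₁ ⊓ I₂) ^ s) ∧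
    (∀ s : ℕ, 1 ≤ s → ∃ t : ℕ, s ≤ t ∧ ∀ x y : B, x - y ∈ (I₁ ⊔ I₂) ^ t →
      ∃ w : B, x - w ∈ I₁ ^ s ∧ y - w ∈ I₂ ^ s) ∧
    (∀ s : ℕ, 1 ≤ s → ∀ z : B ⧸ (I₁ ⊔ I₂) ^ s,
      ∃ x y : B, Ideal.Quotient.mk ((I₁ ⊔ I₂) ^ s) (x - y) = z) := by
  refine ⟨fun s _ => I₁.exists_pow_inf_pow_le_inf_pow I₂ s, fun s _ => ?_, fun s _ z => ?_⟩
  · exact ⟨s + s, le_add_self, fun x y hxy =>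
      Submodule.exists_sub_mem_and_sub_mem_of_sub_mem_sup (Ideal.sup_pow_add_le_pow_sup_pow hxy)⟩
  · obtain ⟨x, rfl⟩ := Ideal.Quotient.mk_surjective z
    exact ⟨x, 0, by rw [sub_zero]⟩
end

section
/- Let A be a commutative local ring and J, J' ⊆ A ideals. Then the sequence of abelian groups 1 → (A/(J∩J'))^× → (A/J)^× × (A/J')^× → (A/(J+J'))^× → 1 is exact, where the first map sends a unit w to the pair of its images under the canonical quotient maps, and the second map sends (u, v) to the image of u times the inverse of the image of v in (A/(J+J'))^×. That is: the first map is injective, its image is exactly the kernel of the second map, and the second map is surjective. -/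
/-!
The ring `R ⧸ (I ⊓ J)` embeds into `R ⧸ I × R ⧸ J` with image the pairs agreeing in
`R ⧸ (I ⊔ J)` (write `a - b = i + j` and lift the pair by `a - i`); this holds in any commutative
ring. Exactness in the middle follows on units: lift a compatible pair `(u, v)` and the pair
`(u⁻¹, v⁻¹)`; by injectivity the two lifts multiply to `1`. Surjectivity is where locality
enters: a surjection out of a local ring is surjective on units, so a unit `t` of `R ⧸ (I ⊔ J)`
lifts to a unit `a` of `R`, and `t` is the image of `(a mod I, 1)`.
-/

theorem IsLocalRing.surjective_units_map_of_surjective {R S : Type*} [CommRing R] [IsLocalRing R]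
    [CommRing S] (f : R →+* S) (hf : Function.Surjective f) :
    Function.Surjective (Units.map f.toMonoidHom) := by
  cases subsingleton_or_nontrivial S
  · exact fun _ => ⟨1, Subsingleton.elim _ _⟩
  · exact surjective_units_map_of_local_ringHom f hf (.of_surjective f hf)

open Ideal.Quotient

namespace Ideal

variable {R : Type*} [CommRing R] {I J : Ideal R}

theorem Quotient.eq_of_factor_inf_eq {x y : R ⧸ (I ⊓ J)}
    (hI : factor inf_le_left x = factor inf_le_left y)
    (hJ : factor inf_le_right x = factor inf_le_right y) : x = y := by
  obtain ⟨a, rfl⟩ := mk_surjective x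
  obtain ⟨b, rfl⟩ := mk_surjective y
  rw [factor_mk, factor_mk, Quotient.eq] at hI hJ
  exact Quotient.eq.mpr ⟨hI, hJ⟩

theorem Quotient.exists_factor_inf_eq_of_factor_sup_eq {x : R ⧸ I} {y : R ⧸ J}
    (h : factor le_sup_left x = factor le_sup_right y) :
    ∃ z : R ⧸ (I ⊓ J), factor inf_le_left z = x ∧ factor inf_le_right z = y := by
  obtain ⟨a, rfl⟩ := mk_surjective x
  obtain ⟨b, rfl⟩ := mk_surjective y
  rw [factor_mk, factor_mk, Quotient.eq] at h
  obtain ⟨i, hi, j, hj, hij⟩ := Submodule.mem_sup.mp h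
  refine ⟨mk _ (a - i), Quotient.eq.mpr (by simpa using hi), Quotient.eq.mpr ?_⟩
  rwa [show a - i - b = j by linear_combination -hij]

variable (I J)

noncomputable def unitsInfToProd : (R ⧸ (I ⊓ J))ˣ →* (R ⧸ I)ˣ × (R ⧸ J)ˣ :=
  (Units.map (factor inf_le_left).toMonoidHom).prod (Units.map (factor inf_le_right).toMonoidHom)

noncomputable def unitsProdToSup : (R ⧸ I)ˣ × (R ⧸ J)ˣ →* (R ⧸ (I ⊔ J))ˣ :=
  (Units.map (factor (T := I ⊔ J) le_sup_left).toMonoidHom).comp (MonoidHom.fst _ _) *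
    ((Units.map (factor (T := I ⊔ J) le_sup_right).toMonoidHom).comp (MonoidHom.snd _ _))⁻¹

theorem unitsInfToProd_injective : Function.Injective (unitsInfToProd I J) := fun _ _ h =>
  Units.ext <| Quotient.eq_of_factor_inf_eq (congrArg (Units.val ∘ Prod.fst) h)
    (congrArg (Units.val ∘ Prod.snd) h)

theorem mulExact_unitsInfToProd_unitsProdToSup :
    Function.MulExact (unitsInfToProd I J) (unitsProdToSup I J) := by
  intro z
  simp only [unitsProdToSup, MonoidHom.mul_apply, MonoidHom.inv_apply, MonoidHom.comp_apply,
    MonoidHom.coe_fst, MonoidHom.coe_snd, mul_inv_eq_one]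
  constructor
  · intro h
    have hinv := congrArg (·⁻¹) h
    simp only [← map_inv] at hinv
    obtain ⟨c, hcI, hcJ⟩ := Quotient.exists_factor_inf_eq_of_factor_sup_eq (congrArg Units.val h)
    obtain ⟨d, hdI, hdJ⟩ :=
      Quotient.exists_factor_inf_eq_of_factor_sup_eq (congrArg Units.val hinv)
    have hcd : c * d = 1 := Quotient.eq_of_factor_inf_eq (by simp [hcI, hdI]) (by simp [hcJ, hdJ])
    exact ⟨Units.mkOfMulEqOne c d hcd, Prod.ext (Units.ext hcI) (Units.ext hcJ)⟩
  · rintro ⟨w, rfl⟩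
    ext
    simp [unitsInfToProd]

theorem unitsProdToSup_surjective [IsLocalRing R] : Function.Surjective (unitsProdToSup I J) := by
  intro t
  obtain ⟨a, rfl⟩ := IsLocalRing.surjective_units_map_of_surjective (mk (I ⊔ J)) mk_surjective t
  exact ⟨(Units.map (mk I).toMonoidHom a, 1), by ext; simp [unitsProdToSup]⟩

end Ideal

/-- Let `A` be a commutative local ring and `J, J' ⊆ A` ideals.  Then the sequence
`1 → (A/(J∩J'))^× → (A/J)^× × (A/J')^× → (A/(J+J'))^× → 1` is exact, where the first map
sends a unit to the pair of its images and the second map sends `(u, v)` to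
`u·v⁻¹` computed in `(A/(J+J'))^×`: the first map is injective, its image is exactly the
kernel of the second map, and the second map is surjective. -/
theorem units_sequence_exact_of_local (A : Type*) [CommRing A] [IsLocalRing A]
    (J J' : Ideal A) :
    Function.Injective (fun w : (A ⧸ (J ⊓ J'))ˣ =>
      (Units.map (Ideal.Quotient.factor (S := J ⊓ J') (T := J) inf_le_left).toMonoidHom w,
       Units.map (Ideal.Quotient.factor (S := J ⊓ J') (T := J') inf_le_right).toMonoidHom w)) ∧
    (∀ z : (A ⧸ J)ˣ × (A ⧸ J')ˣ,
      ((∃ w : (A ⧸ (J ⊓ J'))ˣ,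
        (Units.map (Ideal.Quotient.factor (S := J ⊓ J') (T := J) inf_le_left).toMonoidHom w,
         Units.map (Ideal.Quotient.factor (S := J ⊓ J') (T := J') inf_le_right).toMonoidHom w) = z) ↔
      Units.map (Ideal.Quotient.factor (S := J) (T := J ⊔ J') le_sup_left).toMonoidHom z.1 *
        (Units.map (Ideal.Quotient.factor (S := J') (T := J ⊔ J') le_sup_right).toMonoidHom z.2)⁻¹
          = 1)) ∧
    Function.Surjective (fun z : (A ⧸ J)ˣ × (A ⧸ J')ˣ =>
      Units.map (Ideal.Quotient.factor (S := J) (T := J ⊔ J') le_sup_left).toMonoidHom z.1 *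
        (Units.map (Ideal.Quotient.factor (S := J') (T := J ⊔ J') le_sup_right).toMonoidHom z.2)⁻¹) :=
  ⟨Ideal.unitsInfToProd_injective J J',
    fun z => (Ideal.mulExact_unitsInfToProd_unitsProdToSup J J' z).symm,
    Ideal.unitsProdToSup_surjective J J'⟩
end

section
/- Let R be a commutative ring, A a commutative R-algebra, and I ⊆ A an ideal. Then for every s ≥ 1: (i) d(x) ∈ I^s·Ω¹_{A/R} for every x ∈ I^{s+1}; and (ii) consequently, every element of the kernel of the canonical surjection Ω¹_{A/R}/I^{s+1}Ω¹_{A/R} → Ω¹_{(A/I^{s+1})/R} maps to zero under the canonical map to Ω¹_{A/R}/I^s Ω¹_{A/R}. In particular, the canonical maps Ω¹_{A/R} ⊗_A A/I^s → Ω¹_{(A/I^s)/R} constitute an isomorphism of pro A-modules {Ω¹_{A/R} ⊗_A A/I^s}_s ≅ {Ω¹_{(A/I^s)/R}}_s. -/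
namespace Derivation

variable {R A M : Type*} [CommRing R] [CommRing A] [Algebra R A] [AddCommGroup M] [Module A M]
  [Module R M]

theorem map_mem_pow_smul_top_of_mem_pow_succ (D : Derivation R A M) (I : Ideal A) :
    ∀ s : ℕ, ∀ x ∈ I ^ (s + 1), D x ∈ (I ^ s) • (⊤ : Submodule A M)
  | 0, x, _ => by simp [Ideal.one_eq_top, Submodule.top_smul]
  | s + 1, x, hx => by
    rw [pow_succ'] at hx
    refine Submodule.mul_induction_on hx (fun a ha b hb => ?_) (fun x y hx hy => ?_)
    · rw [leibniz]
      refine add_mem ?_ (Submodule.smul_mem_smul hb Submodule.mem_top)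
      have h := Submodule.smul_mem_smul ha (map_mem_pow_smul_top_of_mem_pow_succ D I s b hb)
      rwa [← Submodule.smul_assoc, Ideal.smul_eq_mul, ← pow_succ'] at h
    · rw [map_add]
      exact add_mem hx hy

end Derivation

namespace KaehlerDifferential

/-- Exactness of the conormal sequence `J/J² → (A ⧸ J) ⊗_A Ω¹_{A/R} → Ω¹_{(A⧸J)/R} → 0`,
pulled back to `Ω¹_{A/R}`. -/
theorem exists_sub_D_mem_smul_top_of_map_quotient_eq_zero (R A : Type*) [CommRing R]
    [CommRing A] [Algebra R A] (J : Ideal A) {ω : KaehlerDifferential R A}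
    (hω : map R R A (A ⧸ J) ω = 0) :
    ∃ x ∈ J, ω - D R A x ∈ J • (⊤ : Submodule A (KaehlerDifferential R A)) := by
  have h_range : (1 : A ⧸ J) ⊗ₜ[A] ω ∈ LinearMap.range (kerCotangentToTensor R A (A ⧸ J)) := by
    rw [range_kerCotangentToTensor R A (A ⧸ J) Ideal.Quotient.mk_surjective]
    simp [hω]
  obtain ⟨z, hz⟩ := h_range
  obtain ⟨⟨x, hx⟩, rfl⟩ := Ideal.toCotangent_surjective _ z
  rw [kerCotangentToTensor_toCotangent] at hz
  refine ⟨x, by simpa [Ideal.Quotient.eq_zero_iff_mem] using hx, ?_⟩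
  have h := congrArg (TensorProduct.quotTensorEquivQuotSMul (KaehlerDifferential R A) J) hz
  rw [show (1 : A ⧸ J) = Ideal.Quotient.mk J 1 from rfl] at h
  simp only [TensorProduct.quotTensorEquivQuotSMul_mk_tmul, one_smul] at h
  exact (Submodule.Quotient.eq _).mp h.symm

end KaehlerDifferential

/-- Let `R` be a commutative ring, `A` a commutative `R`-algebra, and `I ⊆ A` an ideal.
Then for every `s ≥ 1`: (i) `d(x) ∈ I^s · Ω¹_{A/R}` for every `x ∈ I^{s+1}`; (ii) every
differential form `ω ∈ Ω¹_{A/R}` killed by the canonical map `Ω¹_{A/R} → Ω¹_{(A/I^{s+1})/R}`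
lies in `I^s · Ω¹_{A/R}` (i.e. every element of the kernel of the canonical surjection
`Ω¹_{A/R}/I^{s+1}Ω¹_{A/R} → Ω¹_{(A/I^{s+1})/R}` maps to zero in `Ω¹_{A/R}/I^s Ω¹_{A/R}`);
and (iii) the canonical map `Ω¹_{A/R} → Ω¹_{(A/I^s)/R}` is surjective.  In particular the
canonical maps `Ω¹_{A/R} ⊗_A A/I^s → Ω¹_{(A/I^s)/R}` constitute an isomorphism of pro
`A`-modules. -/
theorem kaehler_pro_isomorphism (R : Type*) (A : Type*) [CommRing R] [CommRing A]
    [Algebra R A] (I : Ideal A) :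
    ∀ s : ℕ, 1 ≤ s →
      (∀ x ∈ I ^ (s + 1), (KaehlerDifferential.D R A) x ∈
        (I ^ s) • (⊤ : Submodule A (KaehlerDifferential R A))) ∧
      (∀ ω : KaehlerDifferential R A,
        KaehlerDifferential.map R R A (A ⧸ I ^ (s + 1)) ω = 0 →
          ω ∈ (I ^ s) • (⊤ : Submodule A (KaehlerDifferential R A))) ∧
      Function.Surjective (KaehlerDifferential.map R R A (A ⧸ I ^ s)) := by
  intro s _
  have hD := (KaehlerDifferential.D R A).map_mem_pow_smul_top_of_mem_pow_succ I s
  refine ⟨hD, fun ω hω => ?_, ?_⟩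
  · obtain ⟨x, hx, hωx⟩ :=
      KaehlerDifferential.exists_sub_D_mem_smul_top_of_map_quotient_eq_zero R A _ hω
    have hle : I ^ (s + 1) • (⊤ : Submodule A (KaehlerDifferential R A)) ≤ I ^ s • ⊤ :=
      Submodule.smul_mono_left (Ideal.pow_le_pow_right s.le_succ)
    simpa using add_mem (hle hωx) (hD x hx)
  · exact KaehlerDifferential.map_surjective_of_surjective R R A (A ⧸ I ^ s)
      Ideal.Quotient.mk_surjective
end

section
/- Let p be a prime, A a Noetherian F-finite Z_(p)-algebra in which p is nilpotent, and r ≥ 1. Then the module of absolute Kähler differentials Ω¹_{W_r(A)/ℤ} is a finitely generated W_r(A)-module. -/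
theorem Submodule.eq_top_of_le_sup_smul_top {R M : Type*} [CommRing R] [AddCommGroup M]
    [Module R M] (N : Submodule R M) {I : Ideal R} (hI : IsNilpotent I) (h : ⊤ ≤ N ⊔ I • ⊤) :
    N = ⊤ := by
  obtain ⟨n, hn⟩ := hI
  have key : ∀ j : ℕ, ⊤ ≤ N ⊔ I ^ j • ⊤ := by
    intro j
    induction j with
    | zero => simp
    | succ j ih =>
      calc ⊤ ≤ N ⊔ I ^ j • ⊤ := ih
        _ ≤ N ⊔ I ^ j • (N ⊔ I • ⊤) := sup_le_sup_left (Submodule.smul_mono le_rfl h) _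
        _ = N ⊔ I ^ j • N ⊔ I ^ (j + 1) • ⊤ := by
          rw [Submodule.smul_sup, pow_succ, Submodule.mul_smul, sup_assoc]
        _ ≤ N ⊔ I ^ (j + 1) • ⊤ := sup_le_sup_right (sup_le le_rfl Submodule.smul_le_right) _
  simpa [hn] using key n

theorem Ideal.isNilpotent_span_singleton {R : Type*} [CommRing R] {a : R} (ha : IsNilpotent a) :
    IsNilpotent (Ideal.span {a}) := by
  obtain ⟨n, hn⟩ := ha
  exact ⟨n, by simp [Ideal.span_singleton_pow, hn]⟩

theorem RingHom.Finite.exists_finset_sum_eq {B C : Type*} [CommRing B] [CommRing C] {g : B →+* C}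
    (hg : g.Finite) : ∃ S : Finset C, ∀ c, ∃ a : C → B, ∑ s ∈ S, g (a s) * s = c := by
  let := g.toAlgebra
  obtain ⟨S, hS⟩ := hg.fg_top
  refine ⟨S, fun c => ?_⟩
  obtain ⟨a, -, hc⟩ := Submodule.mem_span_finset.1 (hS.symm ▸ Submodule.mem_top (x := c))
  exact ⟨a, hc⟩

section FrobeniusSpan

variable (p k : ℕ) {B C : Type*} [CommRing B] [CommRing C]

/-- Modulo `p`, this is the `B`-submodule generated by `S` when `B` acts on itself through the
`p ^ k`-th power map. -/
def frobeniusSpan (S : Set B) : Submodule ℤ B :=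
  Submodule.span ℤ (Set.image2 (fun x s => x ^ p ^ k * s) Set.univ S ∪ Set.range ((p : B) * ·))

def FrobeniusFiniteModP (B : Type*) [CommRing B] : Prop :=
  ∃ S : Set B, S.Finite ∧ frobeniusSpan p k S = ⊤

variable {p k}

theorem frobeniusSpan_mono {S T : Set B} (h : S ⊆ T) : frobeniusSpan p k S ≤ frobeniusSpan p k T :=
  Submodule.span_mono (Set.union_subset_union_left _ (Set.image2_subset_left h))

theorem pow_mul_mem_frobeniusSpan {S : Set B} (x : B) {s : B} (hs : s ∈ S) :
    x ^ p ^ k * s ∈ frobeniusSpan p k S :=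
  Submodule.subset_span (Or.inl (Set.mem_image2_of_mem (Set.mem_univ x) hs))

theorem natCast_mul_mem_frobeniusSpan (S : Set B) (b : B) : (p : B) * b ∈ frobeniusSpan p k S :=
  Submodule.subset_span (Or.inr ⟨b, rfl⟩)

theorem map_frobeniusSpan {f : B →+* C} (hf : Function.Surjective f) (S : Set B) :
    (frobeniusSpan p k S).map f.toIntAlgHom.toLinearMap = frobeniusSpan p k (f '' S) := by
  have hp : f ∘ ((p : B) * ·) = ((p : C) * ·) ∘ f := by ext; simp
  rw [frobeniusSpan, frobeniusSpan, Submodule.map_span]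
  simp only [AlgHom.coe_toLinearMap, RingHom.toIntAlgHom_coe]
  rw [Set.image_union, Set.image_image2_distrib (f' := fun x s => x ^ p ^ k * s) (g₁ := f)
      (g₂ := f) (fun _ _ => by rw [map_mul, map_pow]),
    Set.image_univ_of_surjective hf, ← Set.range_comp, hp, Set.range_comp, hf.range_eq,
    Set.image_univ]

theorem AddMonoidHom.map_mem_frobeniusSpan {l : ℕ} (φ : B →+ C) {S : Set B}
    (hp : ∀ b, φ (p * b) = p * φ b)
    (hpow : ∀ x, ∀ s ∈ S, ∃ y, φ (x ^ p ^ k * s) = y ^ p ^ l * φ s) {b : B}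
    (hb : b ∈ frobeniusSpan p k S) : φ b ∈ frobeniusSpan p l (φ '' S) := by
  refine (Submodule.span_le (p := (frobeniusSpan p l (φ '' S)).comap φ.toIntLinearMap)).2 ?_ hb
  rintro _ (⟨x, -, s, hs, rfl⟩ | ⟨b, rfl⟩)
  · obtain ⟨y, hy⟩ := hpow x s hs
    simpa [hy] using pow_mul_mem_frobeniusSpan y (Set.mem_image_of_mem φ hs)
  · simpa [hp] using natCast_mul_mem_frobeniusSpan (k := l) (φ '' S) (φ b)

theorem FrobeniusFiniteModP.of_surjective {f : B →+* C} (hf : Function.Surjective f)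
    (hC : FrobeniusFiniteModP p k C) {U : Set B} (hU : U.Finite)
    (hker : ∀ b, f b = 0 → b ∈ frobeniusSpan p k U) : FrobeniusFiniteModP p k B := by
  obtain ⟨S, hS, hS_top⟩ := hC
  refine ⟨Function.surjInv hf '' S ∪ U, (hS.image _).union hU, eq_top_iff.2 fun b _ => ?_⟩
  have hlift : f '' (Function.surjInv hf '' S) = S := by
    rw [Set.image_image, funext (Function.surjInv_eq hf), Set.image_id']
  obtain ⟨b', hb', hfb'⟩ : f b ∈ (frobeniusSpan p k (Function.surjInv hf '' S)).map
      f.toIntAlgHom.toLinearMap := by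
    rw [map_frobeniusSpan hf, hlift, hS_top]; trivial
  rw [← add_sub_cancel b' b]
  exact add_mem (frobeniusSpan_mono Set.subset_union_left hb')
    (frobeniusSpan_mono Set.subset_union_right (hker _ (by simp_all)))

theorem FrobeniusFiniteModP.of_quotient (h : FrobeniusFiniteModP p k (B ⧸ Ideal.span {(p : B)})) :
    FrobeniusFiniteModP p k B := by
  refine h.of_surjective Ideal.Quotient.mk_surjective Set.finite_empty fun b hb => ?_
  obtain ⟨c, rfl⟩ := Ideal.mem_span_singleton'.1 (Ideal.Quotient.eq_zero_iff_mem.1 hb)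
  exact mul_comm c (p : B) ▸ natCast_mul_mem_frobeniusSpan _ c

theorem FrobeniusFiniteModP.of_finite {g : B →+* B} (hg : ∀ x, g x = x ^ p ^ k) (hfin : g.Finite) :
    FrobeniusFiniteModP p k B := by
  obtain ⟨S, hS⟩ := hfin.exists_finset_sum_eq
  refine ⟨S, S.finite_toSet, eq_top_iff.2 fun b _ => ?_⟩
  obtain ⟨a, rfl⟩ := hS b
  refine Submodule.sum_mem _ fun s hs => ?_
  rw [hg]
  exact pow_mul_mem_frobeniusSpan _ hs

theorem IsFFinite.frobeniusFiniteModP (h : IsFFinite p B) (k : ℕ) : FrobeniusFiniteModP p k B := by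
  obtain ⟨f, hf, hfin⟩ := h
  refine .of_finite (g := f ^ k) (fun x => ?_) ?_
  · rw [RingHom.coe_pow]
    induction k with
    | zero => simp
    | succ k ih => rw [Function.iterate_succ_apply', ih, hf, ← pow_mul, ← pow_succ]
  · induction k with
    | zero => exact RingHom.Finite.id B
    | succ k ih => exact pow_succ f k ▸ ih.comp hfin

end FrobeniusSpan

open KaehlerDifferential in
theorem KaehlerDifferential.finite_of_frobeniusFiniteModP {p k : ℕ} {B : Type*} [CommRing B]
    (hk : k ≠ 0) (hB : FrobeniusFiniteModP p k B) (hp : IsNilpotent (p : B)) :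
    Module.Finite B Ω[B⁄ℤ] := by
  obtain ⟨S, hS, hS_top⟩ := hB
  set N := Submodule.span B (D ℤ B '' S)
  set I := Ideal.span {(p : B)}
  have hpI (ω : Ω[B⁄ℤ]) : (p : B) • ω ∈ I • (⊤ : Submodule B Ω[B⁄ℤ]) :=
    Submodule.smul_mem_smul (Ideal.mem_span_singleton_self _) trivial
  have hpkI (ω : Ω[B⁄ℤ]) : (p ^ k) • ω ∈ I • (⊤ : Submodule B Ω[B⁄ℤ]) := by
    obtain ⟨j, rfl⟩ := Nat.exists_eq_succ_of_ne_zero hk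
    rw [pow_succ', mul_nsmul', ← Nat.cast_smul_eq_nsmul B p]
    exact hpI _
  have hD (b : B) (hb : b ∈ frobeniusSpan p k S) : D ℤ B b ∈ N ⊔ I • ⊤ := by
    induction hb using Submodule.span_induction with
    | mem b hb =>
      rcases hb with ⟨x, -, s, hs, rfl⟩ | ⟨b, rfl⟩
      · rw [Derivation.leibniz, Derivation.leibniz_pow]
        exact add_mem (Submodule.mem_sup_left (N.smul_mem _ (Submodule.subset_span ⟨s, hs, rfl⟩)))
          (Submodule.mem_sup_right (Submodule.smul_mem _ _ (hpkI _)))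
      · rw [Derivation.leibniz, Derivation.map_natCast, smul_zero, add_zero]
        exact Submodule.mem_sup_right (hpI _)
    | zero => simp
    | add x y _ _ hx hy => simpa using add_mem hx hy
    | smul z x _ hx => rw [Derivation.map_smul]; exact Submodule.smul_of_tower_mem _ z hx
  have hN : N = ⊤ := N.eq_top_of_le_sup_smul_top (Ideal.isNilpotent_span_singleton hp) <| by
    refine (span_range_derivation ℤ B).ge.trans (Submodule.span_le.2 ?_)
    rintro _ ⟨b, rfl⟩
    exact hD b (hS_top ▸ Submodule.mem_top)
  exact .of_fg_top (Submodule.fg_def.2 ⟨_, hS.image _, hN⟩)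

namespace WittVector

variable {p : ℕ} [Fact p.Prime] {A : Type*} [CommRing A]

/- Ghost components settle this where `p` is invertible; `MvPolynomial A ℤ` embeds into such a
ring, and maps onto `A` by `X a ↦ a`. -/
theorem frobenius_teichmuller (a : A) : frobenius (teichmuller p a) = teichmuller p (a ^ p) := by
  have rat (x : MvPolynomial A ℚ) : frobenius (teichmuller p x) = teichmuller p (x ^ p) := by
    apply (ghostMap.bijective_of_invertible p (MvPolynomial A ℚ)).1
    ext1 n
    simp only [ghostMap_apply, ghostComponent_frobenius, ghostComponent_teichmuller, ← pow_mul,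
      ← pow_succ']
  have int (x : MvPolynomial A ℤ) : frobenius (teichmuller p x) = teichmuller p (x ^ p) := by
    refine map_injective (MvPolynomial.map (Int.castRingHom ℚ))
      (MvPolynomial.map_injective _ Int.cast_injective) ?_
    rw [IsPoly.map (frobenius_isPoly p), map_teichmuller, map_teichmuller, rat]
    simp only [map_pow]
  have := congrArg (map (MvPolynomial.eval₂Hom (Int.castRingHom A) id)) (int (MvPolynomial.X a))
  rwa [IsPoly.map (frobenius_isPoly p), map_teichmuller, map_teichmuller, map_pow,
    MvPolynomial.eval₂Hom_X'] at this

theorem iterate_frobenius_teichmuller (m : ℕ) (a : A) :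
    frobenius^[m] (teichmuller p a) = teichmuller p (a ^ p ^ m) := by
  induction m with
  | zero => simp
  | succ m ih => rw [Function.iterate_succ_apply', ih, frobenius_teichmuller, ← pow_mul, ← pow_succ]

theorem truncate_iterate_verschiebung_eq_of_coeff_zero_eq {m : ℕ} {x y : WittVector p A}
    (h : x.coeff 0 = y.coeff 0) :
    truncate (m + 1) (verschiebung^[m] x) = truncate (m + 1) (verschiebung^[m] y) := by
  ext i
  rw [coeff_truncate, coeff_truncate]
  rcases (Nat.lt_succ_iff.1 i.isLt).lt_or_eq with hi | hi
  · rw [iterate_verschiebung_coeff_eq_zero _ hi, iterate_verschiebung_coeff_eq_zero _ hi]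
  · have hx := iterate_verschiebung_coeff x m 0
    have hy := iterate_verschiebung_coeff y m 0
    rw [zero_add] at hx hy
    rw [hi, hx, hy, h]

variable (p) in
/-- The truncated Witt vector `(0, …, 0, a)`. -/
noncomputable def lastCoeffHom (m : ℕ) : A →+ TruncatedWittVector p (m + 1) A where
  toFun a := truncate (m + 1) (verschiebung^[m] (teichmuller p a))
  map_zero' := by simp
  map_add' a b := by
    rw [truncate_iterate_verschiebung_eq_of_coeff_zero_eq
      (y := teichmuller p a + teichmuller p b) (by simp [add_coeff_zero]), iterate_map_add, map_add]

theorem lastCoeffHom_apply (m : ℕ) (a : A) :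
    lastCoeffHom p m a = truncate (m + 1) (verschiebung^[m] (teichmuller p a)) :=
  rfl

theorem truncate_iterate_verschiebung (m : ℕ) (y : WittVector p A) :
    truncate (m + 1) (verschiebung^[m] y) = lastCoeffHom p m (y.coeff 0) :=
  truncate_iterate_verschiebung_eq_of_coeff_zero_eq (teichmuller_coeff_zero p _).symm

theorem exists_lastCoeffHom_eq_of_truncate_eq_zero {m : ℕ} (w : TruncatedWittVector p (m + 1) A)
    (hw : TruncatedWittVector.truncate (Nat.le_succ m) w = 0) : ∃ a, lastCoeffHom p m a = w := by
  obtain ⟨y, rfl⟩ := truncate_surjective p (m + 1) A w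
  have hy : ∀ i < m, y.coeff i = 0 := by
    rw [← mem_ker_truncate, RingHom.mem_ker, ← TruncatedWittVector.truncate_wittVector_truncate
      (Nat.le_succ m), hw]
  refine ⟨(y.shift m).coeff 0, ?_⟩
  rw [← truncate_iterate_verschiebung, ← eq_iterate_verschiebung hy]

theorem lastCoeffHom_natCast_mul (m n : ℕ) (a : A) :
    lastCoeffHom p m ((n : A) * a) = n * lastCoeffHom p m a := by
  rw [← nsmul_eq_mul, map_nsmul, nsmul_eq_mul]

theorem lastCoeffHom_pow_mul (m k : ℕ) (x s : A) :
    lastCoeffHom p m (x ^ p ^ (m + k) * s) =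
      truncate (m + 1) (teichmuller p x) ^ p ^ k * lastCoeffHom p m s := by
  rw [lastCoeffHom_apply, lastCoeffHom_apply, ← map_pow, ← map_pow, ← map_mul,
    mul_comm (teichmuller p _), iterate_verschiebung_mul_left, iterate_frobenius_teichmuller,
    ← map_mul, ← pow_mul, ← pow_add, add_comm k, mul_comm s]

end WittVector

namespace TruncatedWittVector

instance {p : ℕ} {A : Type*} : Subsingleton (TruncatedWittVector p 0 A) :=
  ⟨fun _ _ => ext fun i => i.elim0⟩

open WittVector

variable {p : ℕ} [Fact p.Prime] {A : Type*} [CommRing A]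

theorem frobeniusFiniteModP (hA : ∀ k, FrobeniusFiniteModP p k A) (m k : ℕ) :
    FrobeniusFiniteModP p k (TruncatedWittVector p m A) := by
  induction m generalizing k with
  | zero => exact ⟨∅, Set.finite_empty, Subsingleton.elim _ _⟩
  | succ m ih =>
    obtain ⟨T, hT, hT_top⟩ := hA (m + k)
    refine (ih k).of_surjective (truncate_surjective (Nat.le_succ m))
      (hT.image (lastCoeffHom p m)) fun w hw => ?_
    obtain ⟨a, rfl⟩ := exists_lastCoeffHom_eq_of_truncate_eq_zero w hw
    exact (lastCoeffHom p m).map_mem_frobeniusSpan (lastCoeffHom_natCast_mul m p)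
      (fun x s _ => ⟨_, lastCoeffHom_pow_mul m k x s⟩) (hT_top ▸ Submodule.mem_top)

theorem isNilpotent_natCast (hp : IsNilpotent (p : A)) (m : ℕ) :
    IsNilpotent (p : TruncatedWittVector p m A) := by
  induction m with
  | zero => exact ⟨1, Subsingleton.elim _ _⟩
  | succ m ih =>
    obtain ⟨N, hN⟩ := ih
    obtain ⟨n, hn⟩ := hp
    obtain ⟨a, ha⟩ := exists_lastCoeffHom_eq_of_truncate_eq_zero
      ((p : TruncatedWittVector p (m + 1) A) ^ N) (by rw [map_pow, map_natCast, hN])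
    refine ⟨n + N, ?_⟩
    rw [pow_add, ← ha, ← Nat.cast_pow, ← lastCoeffHom_natCast_mul, Nat.cast_pow, hn, zero_mul,
      map_zero]

end TruncatedWittVector

theorem kaehlerDifferential_wittVector_finite_general (p : ℕ) [Fact p.Prime]
    (A : Type*) [CommRing A]
    (hFF : IsFFinite p (A ⧸ Ideal.span {(p : A)}))
    (hpnil : IsNilpotent (p : A)) (r : ℕ) :
    Module.Finite (TruncatedWittVector p r A)
      (KaehlerDifferential ℤ (TruncatedWittVector p r A)) := by
  have hA (k : ℕ) : FrobeniusFiniteModP p k A := (hFF.frobeniusFiniteModP k).of_quotient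
  exact KaehlerDifferential.finite_of_frobeniusFiniteModP one_ne_zero
    (TruncatedWittVector.frobeniusFiniteModP hA r 1)
    (TruncatedWittVector.isNilpotent_natCast hpnil r)

/-- Let `A` be a Noetherian, F-finite `ℤ_(p)`-algebra (every prime `q ≠ p` is invertible in
`A`, and `A/pA` is F-finite) in which `p` is nilpotent, and `r ≥ 1`.  Then the module of
absolute Kähler differentials `Ω¹_{W_r(A)/ℤ}` is a finitely generated `W_r(A)`-module. -/
theorem kaehlerDifferential_wittVector_finite (p : ℕ) [Fact p.Prime]
    (A : Type*) [CommRing A] [IsNoetherianRing A]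
    (hZp : ∀ q : ℕ, q.Prime → q ≠ p → IsUnit (q : A))
    (hFF : IsFFinite p (A ⧸ Ideal.span {(p : A)}))
    (hpnil : IsNilpotent (p : A)) (r : ℕ) (hr : 1 ≤ r) :
    Module.Finite (TruncatedWittVector p r A)
      (KaehlerDifferential ℤ (TruncatedWittVector p r A)) :=
  kaehlerDifferential_wittVector_finite_general p A hFF hpnil r
end
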